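/- Let Ω ⊆ ℝⁿ be measurable with boundary of measure zero and J radially symmetric integrable. Let R₀ be reflection across {x_n = 0} and x₀ a point with x̃₀ = R₀(x₀). Then H^J_Ω(x̃₀) − H^J_Ω(x₀) = 2 ∫_{Ω \ R₀(Ω)} (J(x₀ − y) − J(x₀ − R₀(y))) dy. -/

import Mathlib

open MeasureTheory Set Metric

/-- The nonlocal curvature of a set `Ω` with kernel `J` at a point `x`. -/
noncomputable def nonlocalCurvature {n : ℕ} (J : EuclideanSpace ℝ (Fin n) → ℝ)
    (Ω : Set (EuclideanSpace ℝ (Fin n))) (x : EuclideanSpace ℝ (Fin n)) : ℝ :=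
  ∫ y, J (x - y) * (Set.indicator Ωᶜ (fun _ => (1 : ℝ)) y - Set.indicator Ω (fun _ => (1 : ℝ)) y)

/-- Reflection of `ℝ^{n+1}` across the hyperplane `{x_n = 0}` (the last coordinate). -/
noncomputable def reflectZero {n : ℕ} (x : EuclideanSpace ℝ (Fin (n + 1))) :
    EuclideanSpace ℝ (Fin (n + 1)) :=
  WithLp.toLp 2 (Function.update x (Fin.last n) (-(x (Fin.last n))))

/-! The reflection `R₀` is a linear isometric involution, so for a radial kernel the change of
variables `y ↦ R₀ y` gives `H_Ω(R₀ x₀) = H_{R₀ Ω}(x₀)`. Since `χ_{Ωᶜ} - χ_Ω = 1 - 2 χ_Ω`, the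
difference of the curvatures of `R₀ Ω` and `Ω` at `x₀` is `2 (∫_Ω - ∫_{R₀ Ω}) J (x₀ - ·)`.
The common part `Ω ∩ R₀ Ω` cancels, and `R₀` maps `Ω \ R₀ Ω` onto `R₀ Ω \ Ω`, which turns the
integral over `R₀ Ω \ Ω` into one over `Ω \ R₀ Ω`. -/

noncomputable def reflectZeroLIE (n : ℕ) :
    EuclideanSpace ℝ (Fin (n + 1)) ≃ₗᵢ[ℝ] EuclideanSpace ℝ (Fin (n + 1)) :=
  LinearIsometryEquiv.piLpCongrRight 2 fun i =>
    if i = Fin.last n then LinearIsometryEquiv.neg ℝ else LinearIsometryEquiv.refl ℝ ℝ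

theorem coe_reflectZeroLIE (n : ℕ) : ⇑(reflectZeroLIE n) = reflectZero := by
  funext x
  ext i
  rcases eq_or_ne i (Fin.last n) with rfl | h <;> simp [reflectZeroLIE, reflectZero, *]

theorem reflectZero_involutive (n : ℕ) : Function.Involutive (reflectZero (n := n)) := by
  intro x
  ext i
  rcases eq_or_ne i (Fin.last n) with rfl | h <;> simp [reflectZero, *]

theorem measurePreserving_reflectZero (n : ℕ) :
    MeasurePreserving (reflectZero (n := n)) :=
  coe_reflectZeroLIE n ▸ (reflectZeroLIE n).measurePreserving

theorem measurableEmbedding_reflectZero (n : ℕ) : MeasurableEmbedding (reflectZero (n := n)) :=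
  coe_reflectZeroLIE n ▸ (reflectZeroLIE n).toMeasurableEquiv.measurableEmbedding

section Curvature

variable {n : ℕ} {J : EuclideanSpace ℝ (Fin n) → ℝ}

theorem nonlocalCurvature_comp_linearIsometryEquiv
    (L : EuclideanSpace ℝ (Fin n) ≃ₗᵢ[ℝ] EuclideanSpace ℝ (Fin n)) (hJL : ∀ z, J (L z) = J z)
    (Ω : Set (EuclideanSpace ℝ (Fin n))) (x : EuclideanSpace ℝ (Fin n)) :
    nonlocalCurvature J Ω (L x) = nonlocalCurvature J (L ⁻¹' Ω) x := by
  unfold nonlocalCurvature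
  rw [← L.measurePreserving.integral_comp' (f := L.toMeasurableEquiv)]
  congr 1
  funext z
  simp only [LinearIsometryEquiv.coe_toMeasurableEquiv, ← map_sub, hJL, preimage_compl,
    ← indicator_comp_right, Function.comp_def]

theorem nonlocalCurvature_eq_integral_sub (hJint : Integrable J)
    {Ω : Set (EuclideanSpace ℝ (Fin n))} (hΩ : MeasurableSet Ω) (x : EuclideanSpace ℝ (Fin n)) :
    nonlocalCurvature J Ω x = (∫ y, J (x - y)) - 2 * ∫ y in Ω, J (x - y) := by
  have hf : Integrable (fun y => J (x - y)) := hJint.comp_sub_left x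
  have hpt : ∀ y, J (x - y) * (Ωᶜ.indicator (fun _ => (1 : ℝ)) y - Ω.indicator (fun _ => 1) y)
      = J (x - y) - 2 * Ω.indicator (fun y => J (x - y)) y := by
    intro y
    by_cases hy : y ∈ Ω
    · simp [hy]; ring
    · simp [hy]
  unfold nonlocalCurvature
  simp_rw [hpt]
  rw [integral_sub hf ((hf.indicator hΩ).const_mul 2), integral_const_mul,
    integral_indicator hΩ]

theorem nonlocalCurvature_sub_nonlocalCurvature (hJint : Integrable J)
    {Ω Ω' : Set (EuclideanSpace ℝ (Fin n))} (hΩ : MeasurableSet Ω) (hΩ' : MeasurableSet Ω')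
    (x : EuclideanSpace ℝ (Fin n)) :
    nonlocalCurvature J Ω' x - nonlocalCurvature J Ω x
      = 2 * ((∫ y in Ω, J (x - y)) - ∫ y in Ω', J (x - y)) := by
  rw [nonlocalCurvature_eq_integral_sub hJint hΩ, nonlocalCurvature_eq_integral_sub hJint hΩ']
  ring

end Curvature

section SetIntegral

variable {X : Type*} [MeasurableSpace X] {μ : Measure X} {f : X → ℝ} {s t : Set X}

theorem setIntegral_sub_setIntegral_eq_sdiff (hf : Integrable f μ)
    (hs : MeasurableSet s) (ht : MeasurableSet t) :
    (∫ x in s, f x ∂μ) - ∫ x in t, f x ∂μ = (∫ x in s \ t, f x ∂μ) - ∫ x in t \ s, f x ∂μ := by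
  rw [← integral_inter_add_sdiff ht (hf.integrableOn (s := s)),
    ← integral_inter_add_sdiff hs (hf.integrableOn (s := t)), inter_comm]
  ring

theorem setIntegral_image_sdiff_of_involutive {σ : X → X} (hσ : MeasurePreserving σ μ μ)
    (hσe : MeasurableEmbedding σ) (hinv : Function.Involutive σ) (s : Set X) :
    ∫ x in σ '' s \ s, f x ∂μ = ∫ x in s \ σ '' s, f (σ x) ∂μ := by
  rw [← hσ.setIntegral_image_emb hσe, image_sdiff hinv.injective, ← image_comp, hinv.comp_self,
    image_id]

end SetIntegral

theorem nonlocalCurvature_reflection_difference_general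
    {n : ℕ} (μ : ℝ → ℝ) (J : EuclideanSpace ℝ (Fin (n + 1)) → ℝ)
    (hJ : ∀ z, J z = μ ‖z‖) (hJint : Integrable J)
    (Ω : Set (EuclideanSpace ℝ (Fin (n + 1)))) (hΩ : MeasurableSet Ω)
    (x₀ : EuclideanSpace ℝ (Fin (n + 1))) :
    nonlocalCurvature J Ω (reflectZero x₀) - nonlocalCurvature J Ω x₀
      = 2 * ∫ y in Ω \ (reflectZero '' Ω), (J (x₀ - y) - J (x₀ - reflectZero y)) := by
  have hRΩ : reflectZero ⁻¹' Ω = reflectZero '' Ω :=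
    (congrFun (reflectZero_involutive n).image_eq_preimage_symm Ω).symm
  have hRΩm : MeasurableSet (reflectZero '' Ω) :=
    hRΩ ▸ (measurePreserving_reflectZero n).measurable hΩ
  have hf : Integrable (fun y => J (x₀ - y)) := hJint.comp_sub_left x₀
  have hfR : Integrable (fun y => J (x₀ - reflectZero y)) :=
    ((measurePreserving_reflectZero n).integrable_comp_emb
      (measurableEmbedding_reflectZero n)).mpr hf
  have hcurv := coe_reflectZeroLIE n ▸ nonlocalCurvature_comp_linearIsometryEquiv (J := J)
    (reflectZeroLIE n) (fun z => by rw [hJ, hJ, LinearIsometryEquiv.norm_map]) Ω x₀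
  rw [hcurv, hRΩ, nonlocalCurvature_sub_nonlocalCurvature hJint hΩ hRΩm,
    setIntegral_sub_setIntegral_eq_sdiff hf hΩ hRΩm,
    setIntegral_image_sdiff_of_involutive (measurePreserving_reflectZero n)
      (measurableEmbedding_reflectZero n) (reflectZero_involutive n),
    integral_sub hf.integrableOn hfR.integrableOn]

theorem nonlocalCurvature_reflection_difference
    {n : ℕ} (μ : ℝ → ℝ) (J : EuclideanSpace ℝ (Fin (n + 1)) → ℝ)
    (hJ : ∀ z, J z = μ ‖z‖) (hJint : Integrable J)
    (Ω : Set (EuclideanSpace ℝ (Fin (n + 1)))) (hΩ : MeasurableSet Ω)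
    (hfin : volume Ω ≠ ⊤) (hbd : volume (frontier Ω) = 0)
    (x₀ : EuclideanSpace ℝ (Fin (n + 1))) :
    nonlocalCurvature J Ω (reflectZero x₀) - nonlocalCurvature J Ω x₀
      = 2 * ∫ y in Ω \ (reflectZero '' Ω), (J (x₀ - y) - J (x₀ - reflectZero y)) :=
  nonlocalCurvature_reflection_difference_general μ J hJ hJint Ω hΩ x₀
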